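/- Let K₁ ∈ B(H₁), K₂ ∈ B(H₂), let F₁ : Ω → H₁ and F₂ : Ω → H₂ be Bessel mappings with transform operators θ₁, θ₂, let θ be the transform operator of F₁ ⊕ F₂, and set T = θ*, T₁ = θ₁*, T₂ = θ₂*. Suppose G₁ ∈ B(H₁, L²(Ω, 𝕜)) is a K₁-dual mapping to F₁ (K₁ = T₁ ∘ G₁) and G₂ ∈ B(H₂, L²(Ω, 𝕜)) is a K₂-dual mapping to F₂ (K₂ = T₂ ∘ G₂). Then G₁ ⊕ G₂ is a (K₁ ⊕ K₂)-dual mapping to F₁ ⊕ F₂ (i.e. K₁ ⊕ K₂ = T ∘ (G₁ ⊕ G₂)) if and only if T₁ ∘ G₂ = 0 and T₂ ∘ G₁ = 0. -/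

import Mathlib

/-!
The transform operator of `F₁ ⊕ F₂` is `θ₁ ⊕ θ₂`, so its adjoint is `f ↦ (T₁ f, T₂ f)` and
`T ∘ (G₁ ⊕ G₂)` is the block operator with entries `T₁ G₁, T₁ G₂, T₂ G₁, T₂ G₂`. Its diagonal is
`K₁ ⊕ K₂`, so it equals `K₁ ⊕ K₂` exactly when the off-diagonal blocks vanish.
-/

open MeasureTheory ContinuousLinearMap

/-- The direct sum operator `K₁ ⊕ K₂` on the super Hilbert space `H₁ ⊕ H₂`, mapping
`(u, v)` to `(K₁ u, K₂ v)`. -/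
noncomputable def prodOp {𝕜 : Type*} [RCLike 𝕜]
    {H₁ : Type*} [NormedAddCommGroup H₁] [InnerProductSpace 𝕜 H₁]
    {H₂ : Type*} [NormedAddCommGroup H₂] [InnerProductSpace 𝕜 H₂]
    (K₁ : H₁ →L[𝕜] H₁) (K₂ : H₂ →L[𝕜] H₂) :
    WithLp 2 (H₁ × H₂) →L[𝕜] WithLp 2 (H₁ × H₂) :=
  ((WithLp.prodContinuousLinearEquiv 2 𝕜 H₁ H₂).symm.toContinuousLinearMap).comp
    ((K₁.prodMap K₂).comp (WithLp.prodContinuousLinearEquiv 2 𝕜 H₁ H₂).toContinuousLinearMap)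

/-- The operator `G₁ ⊕ G₂ : H₁ ⊕ H₂ →L E` mapping `(u, v)` to `G₁ u + G₂ v`. -/
noncomputable def coprodOp {𝕜 : Type*} [RCLike 𝕜]
    {H₁ : Type*} [NormedAddCommGroup H₁] [InnerProductSpace 𝕜 H₁]
    {H₂ : Type*} [NormedAddCommGroup H₂] [InnerProductSpace 𝕜 H₂]
    {E : Type*} [NormedAddCommGroup E] [NormedSpace 𝕜 E]
    (G₁ : H₁ →L[𝕜] E) (G₂ : H₂ →L[𝕜] E) : WithLp 2 (H₁ × H₂) →L[𝕜] E :=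
  (G₁.coprod G₂).comp (WithLp.prodContinuousLinearEquiv 2 𝕜 H₁ H₂).toContinuousLinearMap

section DirectSum

variable {𝕜 H₁ H₂ E : Type*} [RCLike 𝕜]
  [NormedAddCommGroup H₁] [InnerProductSpace 𝕜 H₁]
  [NormedAddCommGroup H₂] [InnerProductSpace 𝕜 H₂]
  [NormedAddCommGroup E] [InnerProductSpace 𝕜 E]

@[simp]
lemma prodOp_apply (K₁ : H₁ →L[𝕜] H₁) (K₂ : H₂ →L[𝕜] H₂) (x : WithLp 2 (H₁ × H₂)) :
    prodOp K₁ K₂ x = WithLp.toLp 2 (K₁ x.fst, K₂ x.snd) :=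
  rfl

@[simp]
lemma coprodOp_apply (G₁ : H₁ →L[𝕜] E) (G₂ : H₂ →L[𝕜] E) (x : WithLp 2 (H₁ × H₂)) :
    coprodOp G₁ G₂ x = G₁ x.fst + G₂ x.snd :=
  rfl

lemma adjoint_coprodOp [CompleteSpace H₁] [CompleteSpace H₂] [CompleteSpace E]
    (A₁ : H₁ →L[𝕜] E) (A₂ : H₂ →L[𝕜] E) :
    adjoint (coprodOp A₁ A₂) =
      (WithLp.prodContinuousLinearEquiv 2 𝕜 H₁ H₂).symm.toContinuousLinearMap.comp
        ((adjoint A₁).prod (adjoint A₂)) := by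
  refine ((eq_adjoint_iff _ _).mpr fun f x => ?_).symm
  simp [WithLp.prod_inner_apply, inner_add_right, adjoint_inner_left]

lemma prodOp_comp_eq_prod_comp_coprodOp_iff (T₁ : E →L[𝕜] H₁) (T₂ : E →L[𝕜] H₂)
    (G₁ : H₁ →L[𝕜] E) (G₂ : H₂ →L[𝕜] E) :
    prodOp (T₁.comp G₁) (T₂.comp G₂) =
        ((WithLp.prodContinuousLinearEquiv 2 𝕜 H₁ H₂).symm.toContinuousLinearMap.comp
          (T₁.prod T₂)).comp (coprodOp G₁ G₂) ↔
      T₁.comp G₂ = 0 ∧ T₂.comp G₁ = 0 := by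
  constructor
  · intro h
    constructor
    · ext v
      simpa using (congrArg WithLp.fst (DFunLike.congr_fun h (WithLp.toLp 2 (0, v)))).symm
    · ext u
      simpa using (congrArg WithLp.snd (DFunLike.congr_fun h (WithLp.toLp 2 (u, 0)))).symm
  · rintro ⟨h₁₂, h₂₁⟩
    ext x
    simpa using ⟨DFunLike.congr_fun h₁₂ x.snd, DFunLike.congr_fun h₂₁ x.fst⟩

end DirectSum

lemma eq_coprodOp_of_ae_eq_inner {𝕜 H₁ H₂ Ω : Type*} [RCLike 𝕜]
    [NormedAddCommGroup H₁] [InnerProductSpace 𝕜 H₁]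
    [NormedAddCommGroup H₂] [InnerProductSpace 𝕜 H₂]
    [MeasurableSpace Ω] {μ : Measure Ω} {F₁ : Ω → H₁} {F₂ : Ω → H₂}
    {θ₁ : H₁ →L[𝕜] Lp 𝕜 2 μ} {θ₂ : H₂ →L[𝕜] Lp 𝕜 2 μ} {θ : WithLp 2 (H₁ × H₂) →L[𝕜] Lp 𝕜 2 μ}
    (hθ₁ : ∀ u : H₁, (θ₁ u : Ω → 𝕜) =ᵐ[μ] fun ω => (inner 𝕜 (F₁ ω) u : 𝕜))
    (hθ₂ : ∀ v : H₂, (θ₂ v : Ω → 𝕜) =ᵐ[μ] fun ω => (inner 𝕜 (F₂ ω) v : 𝕜))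
    (hθ : ∀ x : WithLp 2 (H₁ × H₂), (θ x : Ω → 𝕜) =ᵐ[μ]
      fun ω => (inner 𝕜 ((WithLp.equiv 2 (H₁ × H₂)).symm (F₁ ω, F₂ ω)) x : 𝕜)) :
    θ = coprodOp θ₁ θ₂ := by
  ext1 x
  refine Lp.ext ?_
  filter_upwards [hθ x, Lp.coeFn_add (θ₁ x.fst) (θ₂ x.snd), hθ₁ x.fst, hθ₂ x.snd]
    with ω hθω hadd hθ₁ω hθ₂ω
  rw [hθω, coprodOp_apply, hadd, Pi.add_apply, hθ₁ω, hθ₂ω, WithLp.prod_inner_apply]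
  rfl

theorem prod_dual_iff_general
    {𝕜 : Type*} [RCLike 𝕜]
    {H₁ : Type*} [NormedAddCommGroup H₁] [InnerProductSpace 𝕜 H₁] [CompleteSpace H₁]
    {H₂ : Type*} [NormedAddCommGroup H₂] [InnerProductSpace 𝕜 H₂] [CompleteSpace H₂]
    {Ω : Type*} [MeasurableSpace Ω] {μ : Measure Ω}
    (K₁ : H₁ →L[𝕜] H₁) (K₂ : H₂ →L[𝕜] H₂)
    (F₁ : Ω → H₁) (F₂ : Ω → H₂)
    (θ₁ : H₁ →L[𝕜] Lp 𝕜 2 μ)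
    (hθ₁ : ∀ u : H₁, (θ₁ u : Ω → 𝕜) =ᵐ[μ] fun ω => (inner 𝕜 (F₁ ω) u : 𝕜))
    (θ₂ : H₂ →L[𝕜] Lp 𝕜 2 μ)
    (hθ₂ : ∀ v : H₂, (θ₂ v : Ω → 𝕜) =ᵐ[μ] fun ω => (inner 𝕜 (F₂ ω) v : 𝕜))
    (θ : WithLp 2 (H₁ × H₂) →L[𝕜] Lp 𝕜 2 μ)
    (hθ : ∀ x : WithLp 2 (H₁ × H₂), (θ x : Ω → 𝕜) =ᵐ[μ]
      fun ω => (inner 𝕜 ((WithLp.equiv 2 (H₁ × H₂)).symm (F₁ ω, F₂ ω)) x : 𝕜))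
    (G₁ : H₁ →L[𝕜] Lp 𝕜 2 μ) (G₂ : H₂ →L[𝕜] Lp 𝕜 2 μ)
    (hG₁ : K₁ = (ContinuousLinearMap.adjoint θ₁).comp G₁)
    (hG₂ : K₂ = (ContinuousLinearMap.adjoint θ₂).comp G₂) :
    prodOp K₁ K₂ = (ContinuousLinearMap.adjoint θ).comp (coprodOp G₁ G₂) ↔
    ((ContinuousLinearMap.adjoint θ₁).comp G₂ = 0 ∧
     (ContinuousLinearMap.adjoint θ₂).comp G₁ = 0) := by
  rw [eq_coprodOp_of_ae_eq_inner hθ₁ hθ₂ hθ, adjoint_coprodOp, hG₁, hG₂]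
  exact prodOp_comp_eq_prod_comp_coprodOp_iff _ _ G₁ G₂

/-- If `G₁` is a `K₁`-dual mapping to `F₁` and `G₂` is a `K₂`-dual mapping to `F₂`, then
`G₁ ⊕ G₂` is a `(K₁ ⊕ K₂)`-dual mapping to `F₁ ⊕ F₂` if and only if `T₁ ∘ G₂ = 0` and
`T₂ ∘ G₁ = 0`, where `T = θ*`, `T₁ = θ₁*`, `T₂ = θ₂*`. -/
theorem prod_dual_iff
    {𝕜 : Type*} [RCLike 𝕜] [MeasurableSpace 𝕜] [BorelSpace 𝕜]
    {H₁ : Type*} [NormedAddCommGroup H₁] [InnerProductSpace 𝕜 H₁] [CompleteSpace H₁]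
    {H₂ : Type*} [NormedAddCommGroup H₂] [InnerProductSpace 𝕜 H₂] [CompleteSpace H₂]
    {Ω : Type*} [MeasurableSpace Ω] {μ : Measure Ω}
    (K₁ : H₁ →L[𝕜] H₁) (K₂ : H₂ →L[𝕜] H₂)
    (F₁ : Ω → H₁) (F₂ : Ω → H₂) (B₁ B₂ : ℝ) (hB₁ : 0 < B₁) (hB₂ : 0 < B₂)
    (hbessel₁ : ∀ u : H₁, Measurable (fun ω => (inner 𝕜 (F₁ ω) u : 𝕜)) ∧
      ∫ ω, ‖(inner 𝕜 (F₁ ω) u : 𝕜)‖ ^ 2 ∂μ ≤ B₁ * ‖u‖ ^ 2)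
    (hbessel₂ : ∀ v : H₂, Measurable (fun ω => (inner 𝕜 (F₂ ω) v : 𝕜)) ∧
      ∫ ω, ‖(inner 𝕜 (F₂ ω) v : 𝕜)‖ ^ 2 ∂μ ≤ B₂ * ‖v‖ ^ 2)
    (θ₁ : H₁ →L[𝕜] Lp 𝕜 2 μ)
    (hθ₁ : ∀ u : H₁, (θ₁ u : Ω → 𝕜) =ᵐ[μ] fun ω => (inner 𝕜 (F₁ ω) u : 𝕜))
    (θ₂ : H₂ →L[𝕜] Lp 𝕜 2 μ)
    (hθ₂ : ∀ v : H₂, (θ₂ v : Ω → 𝕜) =ᵐ[μ] fun ω => (inner 𝕜 (F₂ ω) v : 𝕜))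
    (θ : WithLp 2 (H₁ × H₂) →L[𝕜] Lp 𝕜 2 μ)
    (hθ : ∀ x : WithLp 2 (H₁ × H₂), (θ x : Ω → 𝕜) =ᵐ[μ]
      fun ω => (inner 𝕜 ((WithLp.equiv 2 (H₁ × H₂)).symm (F₁ ω, F₂ ω)) x : 𝕜))
    (G₁ : H₁ →L[𝕜] Lp 𝕜 2 μ) (G₂ : H₂ →L[𝕜] Lp 𝕜 2 μ)
    (hG₁ : K₁ = (ContinuousLinearMap.adjoint θ₁).comp G₁)
    (hG₂ : K₂ = (ContinuousLinearMap.adjoint θ₂).comp G₂) :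
    prodOp K₁ K₂ = (ContinuousLinearMap.adjoint θ).comp (coprodOp G₁ G₂) ↔
    ((ContinuousLinearMap.adjoint θ₁).comp G₂ = 0 ∧
     (ContinuousLinearMap.adjoint θ₂).comp G₁ = 0) :=
  prod_dual_iff_general K₁ K₂ F₁ F₂ θ₁ hθ₁ θ₂ hθ₂ θ hθ G₁ G₂ hG₁ hG₂
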